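/- arXiv:1610.04117 — 5 statements merged into one kernel-verified Lean document; each statement's English description precedes it below -/
import Mathlib

section
/- Let v : A → Γ ∪ {0} be a rank-1 valuation on a ring A with the v-topology, and suppose A contains a topologically nilpotent unit ϖ. If f ∈ A is power-bounded then v(f) ≤ 1. -/
/-! If `v f > 1`, then `(v f)⁻¹ < 1`, so by the rank-one hypothesis some power `(v f)⁻ⁿ` drops
below any given nonzero value. Power-boundedness puts `ϖ ^ k * f ^ n` in the unit ball for a fixed
`k` and all `n`, and `v ϖ ^ k ≠ 0` because `ϖ` is a unit; taking `n` with `(v f)⁻ⁿ < v ϖ ^ k`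
gives `v (ϖ ^ k * f ^ n) > 1`, a contradiction. -/

theorem le_one_of_forall_mul_pow_le_one {Γ : Type*} [LinearOrderedCommGroupWithZero Γ]
    (hrank : ∀ γ δ : Γ, γ ≠ 0 → δ ≠ 0 → γ < 1 → ∃ n : ℕ, γ ^ n < δ)
    {a c : Γ} (hc : c ≠ 0) (h : ∀ n : ℕ, c * a ^ n ≤ 1) : a ≤ 1 := by
  by_contra! ha
  have ha₀ : 0 < a := zero_lt_one.trans ha
  obtain ⟨n, hn⟩ := hrank a⁻¹ c (inv_ne_zero ha₀.ne') hc (inv_lt_one_of_one_lt₀ ha)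
  rw [inv_pow, inv_lt_iff_one_lt_mul₀ (pow_pos ha₀ n)] at hn
  exact (h n).not_gt hn

/-- For a rank-1 valued ring `A` (valuation topology) containing a
topologically nilpotent unit `ϖ`, any power-bounded `f` satisfies `v f ≤ 1`. -/
theorem stmt8 {A Γ : Type*} [CommRing A] [LinearOrderedCommGroupWithZero Γ]
    [hv : Valued A Γ]
    (hrank : ∀ γ δ : Γ, γ ≠ 0 → δ ≠ 0 → γ < 1 → ∃ n : ℕ, γ ^ n < δ)
    (ϖ : A) (hϖu : IsUnit ϖ)
    (hϖ : Filter.Tendsto (fun n : ℕ => ϖ ^ n) Filter.atTop (nhds 0))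
    (f : A)
    (hbd : ∀ U ∈ nhds (0 : A), ∃ V ∈ nhds (0 : A), ∀ x ∈ V, ∀ n : ℕ, x * f ^ n ∈ U) :
    hv.v f ≤ 1 := by
  obtain ⟨V, hV, hVf⟩ := hbd _ ((Valued.isOpen_integer A).mem_nhds hv.v.integer.zero_mem)
  obtain ⟨k, hk⟩ := (hϖ.eventually_mem hV).exists
  refine le_one_of_forall_mul_pow_le_one hrank ((hϖu.pow k).map hv.v).ne_zero fun n => ?_
  simpa only [map_mul, map_pow] using (Valuation.mem_integer_iff _ _).mp (hVf _ hk n)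
end

section
/- Let Γ be a totally ordered abelian group of rank 1 and let j, j' : Γ → ℝ>0 be two injective homomorphisms of ordered groups. Then there exists a unique real number e > 0 such that j' = j^e (i.e. j'(γ) = j(γ)^e for all γ ∈ Γ). -/
/-!
Taking logarithms turns `j` and `j'` into strictly monotone maps `f g : Γ → ℝ` sending products
to sums. Fix `γ₀ > 1`. If the ratios `f γ / f γ₀` and `g γ / g γ₀` differed, a rational `p / q`
strictly between them would give `γ₀ ^ p < γ ^ q` through one map and `γ ^ q < γ₀ ^ p` through
the other. So `g = e • f` with `e = g γ₀ / f γ₀ > 0`, that is `j' = j ^ e`.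
-/

open Real

section Group

variable {G : Type*} [Group G]

lemma map_zpow_of_map_mul_eq_add {f : G → ℝ} (hf : ∀ a b, f (a * b) = f a + f b)
    (a : G) (n : ℤ) : f (a ^ n) = n * f a :=
  (map_zsmul (AddMonoidHom.mk' (fun a : Additive G => f a.toMul) hf) n (Additive.ofMul a)).trans
    (zsmul_eq_mul _ _)

lemma map_one_of_map_mul_eq_add {f : G → ℝ} (hf : ∀ a b, f (a * b) = f a + f b) : f 1 = 0 := by
  simpa using map_zpow_of_map_mul_eq_add hf 1 0

lemma div_le_div_of_strictMono_of_map_mul_eq_add [LinearOrder G] {f g : G → ℝ}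
    (hf : StrictMono f) (hg : StrictMono g)
    (hf_mul : ∀ a b, f (a * b) = f a + f b) (hg_mul : ∀ a b, g (a * b) = g a + g b)
    {γ₀ : G} (hf₀ : 0 < f γ₀) (hg₀ : 0 < g γ₀) (γ : G) :
    f γ / f γ₀ ≤ g γ / g γ₀ := by
  by_contra! h
  obtain ⟨r, hgr, hrf⟩ := exists_rat_btwn h
  have hden : (0 : ℝ) < r.den := by exact_mod_cast r.pos
  rw [Rat.cast_def, div_lt_div_iff₀ hg₀ hden] at hgr
  rw [Rat.cast_def, div_lt_div_iff₀ hden hf₀] at hrf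
  have hlt : γ₀ ^ r.num < γ ^ (r.den : ℤ) := hf.lt_iff_lt.mp (by
    rw [map_zpow_of_map_mul_eq_add hf_mul, map_zpow_of_map_mul_eq_add hf_mul]
    push_cast
    linarith)
  have hgt := hg hlt
  rw [map_zpow_of_map_mul_eq_add hg_mul, map_zpow_of_map_mul_eq_add hg_mul] at hgt
  push_cast at hgt
  linarith

end Group

lemma existsUnique_pos_mul_of_strictMono_of_map_mul_eq_add {G : Type*} [CommGroup G]
    [LinearOrder G] [IsOrderedMonoid G] [Nontrivial G] {f g : G → ℝ}
    (hf : StrictMono f) (hg : StrictMono g)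
    (hf_mul : ∀ a b, f (a * b) = f a + f b) (hg_mul : ∀ a b, g (a * b) = g a + g b) :
    ∃! c : ℝ, 0 < c ∧ ∀ γ, g γ = c * f γ := by
  obtain ⟨γ₀, hγ₀⟩ := exists_one_lt' (α := G)
  have hf₀ : 0 < f γ₀ := map_one_of_map_mul_eq_add hf_mul ▸ hf hγ₀
  have hg₀ : 0 < g γ₀ := map_one_of_map_mul_eq_add hg_mul ▸ hg hγ₀
  refine ⟨g γ₀ / f γ₀, ⟨div_pos hg₀ hf₀, fun γ => ?_⟩, fun c ⟨_, hc⟩ => ?_⟩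
  · have h₁ := div_le_div_of_strictMono_of_map_mul_eq_add hf hg hf_mul hg_mul hf₀ hg₀ γ
    have h₂ := div_le_div_of_strictMono_of_map_mul_eq_add hg hf hg_mul hf_mul hg₀ hf₀ γ
    have heq := le_antisymm h₂ h₁
    field_simp at heq ⊢
    linarith
  · rw [hc γ₀, mul_div_assoc, div_self hf₀.ne', mul_one]

lemma log_map_mul {G : Type*} [Mul G] {j : G → ℝ} (hpos : ∀ γ, 0 < j γ)
    (hmul : ∀ a b, j (a * b) = j a * j b) (a b : G) :
    log (j (a * b)) = log (j a) + log (j b) := by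
  rw [hmul, log_mul (hpos a).ne' (hpos b).ne']

lemma strictMono_log_comp {G : Type*} [Preorder G] {j : G → ℝ} (hpos : ∀ γ, 0 < j γ)
    (hj : StrictMono j) :
    StrictMono fun γ => log (j γ) :=
  fun _ _ h => log_lt_log (hpos _) (hj h)

theorem stmt9_general {Γ : Type*} [CommGroup Γ] [LinearOrder Γ] [IsOrderedMonoid Γ] [Nontrivial Γ]
    (j j' : Γ → ℝ)
    (hjpos : ∀ γ, 0 < j γ) (hj'pos : ∀ γ, 0 < j' γ)
    (hjmul : ∀ a b, j (a * b) = j a * j b)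
    (hj'mul : ∀ a b, j' (a * b) = j' a * j' b)
    (hjmono : Monotone j) (hj'mono : Monotone j')
    (hjinj : Function.Injective j) (hj'inj : Function.Injective j') :
    ∃! e : ℝ, 0 < e ∧ ∀ γ, j' γ = j γ ^ e := by
  have hlog : ∀ e γ, j' γ = j γ ^ e ↔ log (j' γ) = e * log (j γ) := fun e γ => by
    rw [← log_rpow (hjpos γ)]
    exact log_injOn_pos.eq_iff (hj'pos γ) (rpow_pos_of_pos (hjpos γ) e) |>.symm
  simp only [hlog]
  exact existsUnique_pos_mul_of_strictMono_of_map_mul_eq_add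
    (strictMono_log_comp hjpos (hjmono.strictMono_of_injective hjinj))
    (strictMono_log_comp hj'pos (hj'mono.strictMono_of_injective hj'inj))
    (log_map_mul hjpos hjmul) (log_map_mul hj'pos hj'mul)

/-- Two injective order-preserving homomorphisms `j, j'` from a
nontrivial rank-1 totally ordered abelian group `Γ` into `ℝ>0` differ by a
unique positive real exponent: `j' = j ^ e`. Rank 1 is encoded by the
archimedean property. -/
theorem stmt9 {Γ : Type*} [CommGroup Γ] [LinearOrder Γ] [IsOrderedMonoid Γ] [Nontrivial Γ]
    (harch : ∀ γ δ : Γ, γ < 1 → ∃ n : ℕ, γ ^ n < δ)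
    (j j' : Γ → ℝ)
    (hjpos : ∀ γ, 0 < j γ) (hj'pos : ∀ γ, 0 < j' γ)
    (hjmul : ∀ a b, j (a * b) = j a * j b)
    (hj'mul : ∀ a b, j' (a * b) = j' a * j' b)
    (hjmono : Monotone j) (hj'mono : Monotone j')
    (hjinj : Function.Injective j) (hj'inj : Function.Injective j') :
    ∃! e : ℝ, 0 < e ∧ ∀ γ, j' γ = j γ ^ e :=
  stmt9_general j j' hjpos hj'pos hjmul hj'mul hjmono hj'mono hjinj hj'inj
end

section
/- Let X be a valuative space (locally coherent sober space in which the set of generizations of every point is totally ordered by specialization) and let [X] denote the set of maximal points of X with the quotient topology induced by the separation map sep_X : X → [X] sending each point to its unique maximal generization. Then [X] is a T1 space. -/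
/-- A coherent open subset: open, quasi-compact, quasi-separated, with a basis
of quasi-compact open subsets. -/
def IsCoherentOpen {X : Type*} [TopologicalSpace X] (U : Set X) : Prop :=
  IsOpen U ∧ IsCompact U ∧
    (∀ V W : Set X, IsOpen V → IsOpen W → V ⊆ U → W ⊆ U → IsCompact V → IsCompact W →
      IsCompact (V ∩ W)) ∧
    (∀ y ∈ U, ∀ V : Set X, IsOpen V → y ∈ V →
      ∃ W : Set X, IsOpen W ∧ IsCompact W ∧ y ∈ W ∧ W ⊆ U ∩ V)

/-- Locally coherent: covered by coherent open subspaces. -/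
def LocallyCoherent (X : Type*) [TopologicalSpace X] : Prop :=
  ∀ x : X, ∃ U : Set X, x ∈ U ∧ IsCoherentOpen U

/-- For a valuative space `X` (locally coherent, sober, with
totally ordered generizations), the separated quotient `[X]` — the set of
maximal points with the quotient topology induced by the separation map — is a
T1 space. -/
theorem stmt14 {X : Type*} [tX : TopologicalSpace X] [QuasiSober X] [T0Space X]
    (hloc : LocallyCoherent X)
    (hchain : ∀ x y z : X, x ∈ closure ({y} : Set X) → x ∈ closure ({z} : Set X) →
      y ∈ closure ({z} : Set X) ∨ z ∈ closure ({y} : Set X))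
    (sep : X → {x : X // ∀ y : X, x ∈ closure ({y} : Set X) → y = x})
    (hsep : ∀ x : X, x ∈ closure ({(sep x : X)} : Set X)) :
    @T1Space _ (TopologicalSpace.coinduced sep tX) := by
  letI := TopologicalSpace.coinduced sep tX
  refine ⟨fun m => ?_⟩
  rw [isClosed_coinduced]
  have : sep ⁻¹' {m} = closure ({(m : X)} : Set X) := by
    ext x
    simp only [Set.mem_preimage, Set.mem_singleton_iff]
    constructor
    · rintro rfl
      exact hsep x
    · intro hx
      have h1 := hsep x
      rcases hchain x (sep x : X) (m : X) h1 hx with h | h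
      · exact Subtype.ext ((sep x).2 _ h).symm
      · exact Subtype.ext (m.2 _ h)
  rw [this]
  exact isClosed_closure
end

section
/- Let X be a valuative space, [X] its separated quotient with separation map sep_X : X → [X], and let Y be a T1 topological space. Then every continuous map f : X → Y factors uniquely through sep_X, i.e. there exists a unique continuous g : [X] → Y with f = g ∘ sep_X. -/
/-- For a valuative space `X` with separated quotient `[X]`
(maximal points, quotient topology via the separation map `sep`), every
continuous map from `X` to a T1 space factors uniquely and continuously
through `sep`. -/
theorem stmt15 {X Y : Type*} [tX : TopologicalSpace X] [QuasiSober X] [T0Space X]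
    [TopologicalSpace Y] [T1Space Y]
    (hloc : LocallyCoherent X)
    (hchain : ∀ x y z : X, x ∈ closure ({y} : Set X) → x ∈ closure ({z} : Set X) →
      y ∈ closure ({z} : Set X) ∨ z ∈ closure ({y} : Set X))
    (sep : X → {x : X // ∀ y : X, x ∈ closure ({y} : Set X) → y = x})
    (hsep : ∀ x : X, x ∈ closure ({(sep x : X)} : Set X))
    (f : X → Y) (hf : Continuous f) :
    ∃! g : {x : X // ∀ y : X, x ∈ closure ({y} : Set X) → y = x} → Y,
      @Continuous _ _ (TopologicalSpace.coinduced sep tX) _ g ∧ f = g ∘ sep := by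
  -- key: f x = f (sep x) for all x
  have key : ∀ x : X, f x = f (sep x : X) := by
    intro x
    have h1 : x ∈ f ⁻¹' {f (sep x : X)} := by
      have hc : IsClosed (f ⁻¹' {f (sep x : X)}) :=
        (isClosed_singleton).preimage hf
      have : closure ({(sep x : X)} : Set X) ⊆ f ⁻¹' {f (sep x : X)} :=
        hc.closure_subset_iff.mpr (by simp)
      exact this (hsep x)
    simpa using h1
  -- sep is "identity" on maximal points
  have hsid : ∀ ξ : {x : X // ∀ y : X, x ∈ closure ({y} : Set X) → y = x},
      sep (ξ : X) = ξ := by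
    intro ξ
    exact Subtype.ext (ξ.2 _ (hsep ξ))
  refine ⟨fun ξ => f (ξ : X), ⟨?_, ?_⟩, ?_⟩
  · rw [continuous_coinduced_dom]
    have : (fun ξ : {x : X // ∀ y : X, x ∈ closure ({y} : Set X) → y = x} =>
        f (ξ : X)) ∘ sep = f := by
      funext x; exact (key x).symm
    rw [this]; exact hf
  · funext x; exact key x
  · rintro g ⟨-, hg⟩
    funext ξ
    have := congrFun hg (ξ : X)
    rw [this, Function.comp_apply, hsid ξ]
end

section
/- Let X be a valuative space such that there is a covering of X by reflexive quasi-compact open subsets W_i. Then X is reflexive, i.e. for any two coherent open subsets U ⊆ V of X with [U] = [V] (equal sets of maximal points) one has U = V. -/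
/-- The set of maximal points (with respect to generization) of `X` lying in `U`. -/
def MaxPts {X : Type*} [TopologicalSpace X] (U : Set X) : Set X :=
  {x | x ∈ U ∧ ∀ y : X, x ∈ closure ({y} : Set X) → y = x}

/-- Reflexivity of an open subspace `W`: open subsets `U ⊆ V ⊆ W` with
quasi-compact inclusion `U ↪ V` and equal sets of maximal points coincide. -/
def ReflexiveOn {X : Type*} [TopologicalSpace X] (W : Set X) : Prop :=
  ∀ U V : Set X, IsOpen U → IsOpen V → U ⊆ V → V ⊆ W →
    (∀ K : Set X, IsOpen K → IsCompact K → K ⊆ V → IsCompact (U ∩ K)) →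
    MaxPts U = MaxPts V → U = V

/-- A quasi-separated valuative space covered by reflexive
quasi-compact open subsets is reflexive: coherent open `U ⊆ V` with
`[U] = [V]` satisfy `U = V`. -/
theorem stmt17 {X ι : Type*} [TopologicalSpace X] [QuasiSober X] [T0Space X]
    [QuasiSeparatedSpace X]
    (hchain : ∀ x y z : X, x ∈ closure ({y} : Set X) → x ∈ closure ({z} : Set X) →
      y ∈ closure ({z} : Set X) ∨ z ∈ closure ({y} : Set X))
    (W : ι → Set X) (hWopen : ∀ i, IsOpen (W i)) (hWcpt : ∀ i, IsCompact (W i))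
    (hWrefl : ∀ i, ReflexiveOn (W i)) (hWcover : (⋃ i, W i) = Set.univ)
    (U V : Set X) (hU : IsCoherentOpen U) (hV : IsCoherentOpen V) (hUV : U ⊆ V)
    (hmax : MaxPts U = MaxPts V) : U = V := by
  have hmaxint : ∀ (A B : Set X), MaxPts (A ∩ B) = MaxPts A ∩ B := by
    intro A B
    ext x
    simp only [MaxPts, Set.mem_setOf_eq, Set.mem_inter_iff]
    tauto
  have key : ∀ i, U ∩ W i = V ∩ W i := by
    intro i
    apply hWrefl i (U ∩ W i) (V ∩ W i) (hU.1.inter (hWopen i)) (hV.1.inter (hWopen i))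
      (Set.inter_subset_inter_left _ hUV) Set.inter_subset_right
    · intro K hKo hKc hKV
      have h1 : IsCompact (W i ∩ K) :=
        QuasiSeparatedSpace.inter_isCompact _ _ (hWopen i) (hWcpt i) hKo hKc
      have h2 : IsCompact (U ∩ (W i ∩ K)) :=
        QuasiSeparatedSpace.inter_isCompact _ _ hU.1 hU.2.1 ((hWopen i).inter hKo) h1
      simpa [Set.inter_assoc] using h2
    · rw [hmaxint, hmaxint, hmax]
  ext x
  have hx : x ∈ ⋃ i, W i := by rw [hWcover]; trivial
  obtain ⟨i, hi⟩ := Set.mem_iUnion.mp hx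
  constructor
  · intro hxU
    have : x ∈ V ∩ W i := (key i) ▸ ⟨hxU, hi⟩
    exact this.1
  · intro hxV
    have : x ∈ U ∩ W i := (key i).symm ▸ ⟨hxV, hi⟩
    exact this.1
end
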